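/- If f : ℂ → ℂ is K-quasiconformal (in the analytic sense, with Beltrami coefficient bounded by (K−1)/(K+1)) and in particular if f is a real-linear map with dilatation K, then for any family Γ of curves, mod(f(Γ)) ≤ K · mod(Γ). -/

import Mathlib

open MeasureTheory

/-- Line integral of a density `ρ` along a curve `γ : ℝ → ℂ` parametrized on `[0,1]`. -/
noncomputable def curveIntegral' (ρ : ℂ → ℝ) (γ : ℝ → ℂ) : ℝ :=
  ∫ t in (0:ℝ)..1, ρ (γ t) * ‖deriv γ t‖

/-- `ρ` is an allowable (admissible) metric for the curve family `Γ`. -/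
def Allowable (ρ : ℂ → ℝ) (Γ : Set (ℝ → ℂ)) : Prop :=
  Measurable ρ ∧ (∀ z, 0 ≤ ρ z) ∧ ∀ γ ∈ Γ, 1 ≤ curveIntegral' ρ γ

/-- The modulus of a curve family. -/
noncomputable def modulus (Γ : Set (ℝ → ℂ)) : ENNReal :=
  ⨅ (ρ : ℂ → ℝ) (_ : Allowable ρ Γ), ∫⁻ z : ℂ, ENNReal.ofReal (ρ z ^ 2)

/-!
An allowable density `ρ` for `Γ` is transported to `σ₂⁻¹ · ρ ∘ f⁻¹`. Since `f` stretches every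
tangent vector by at least `σ₂`, the new density still gives every curve `f ∘ γ` length at
least `1`, and by the linear change of variables its area integral is
`σ₂⁻² |det f| ∫ ρ² = (σ₁ / σ₂) ∫ ρ²`.
-/

theorem ContinuousLinearEquiv.comp_deriv {𝕜 E F : Type*} [NontriviallyNormedField 𝕜]
    [NormedAddCommGroup E] [NormedSpace 𝕜 E] [NormedAddCommGroup F] [NormedSpace 𝕜 F]
    (iso : E ≃L[𝕜] F) (γ : 𝕜 → E) (t : 𝕜) :
    deriv (iso ∘ γ) t = iso (deriv γ t) := by
  rw [← fderiv_apply_one_eq_deriv, iso.comp_fderiv]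
  rfl

theorem IntervalIntegrable.mul_norm_map {E F : Type*} [NormedAddCommGroup E] [NormedSpace ℝ E]
    [MeasurableSpace E] [OpensMeasurableSpace E] [NormedAddCommGroup F] [NormedSpace ℝ F]
    {μ : Measure ℝ} {a b : ℝ} {w : ℝ → ℝ} {u : ℝ → E} (L : E →L[ℝ] F) (hu : Measurable u)
    (h : IntervalIntegrable (fun t => w t * ‖u t‖) μ a b) :
    IntervalIntegrable (fun t => w t * ‖L (u t)‖) μ a b := by
  -- `t ↦ w t` need not be measurable, so we write the integrand as the integrable function
  -- `w t * ‖u t‖` times a measurable factor.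
  have hfactor : (fun t => w t * ‖L (u t)‖) =
      fun t => w t * ‖u t‖ * (‖L (u t)‖ / ‖u t‖) := by
    funext t
    rcases eq_or_ne (u t) 0 with hu0 | hu0
    · simp [hu0]
    · field_simp
  have hmeas : AEStronglyMeasurable (fun t => w t * ‖L (u t)‖) (μ.restrict (Set.uIoc a b)) := by
    rw [hfactor]
    exact h.def'.aestronglyMeasurable.mul
      ((L.continuous.norm.measurable.comp hu).div hu.norm).aestronglyMeasurable
  refine (h.norm.const_mul ‖L‖).mono_fun' hmeas (Filter.Eventually.of_forall fun t => ?_)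
  calc ‖w t * ‖L (u t)‖‖ = |w t| * ‖L (u t)‖ := by simp [Real.norm_eq_abs]
    _ ≤ |w t| * (‖L‖ * ‖u t‖) := by gcongr; exact L.le_opNorm (u t)
    _ = ‖L‖ * ‖w t * ‖u t‖‖ := by rw [norm_mul, norm_norm, Real.norm_eq_abs]; ring

theorem lintegral_comp_linearEquiv_symm {E : Type*} [NormedAddCommGroup E] [NormedSpace ℝ E]
    [MeasurableSpace E] [BorelSpace E] [FiniteDimensional ℝ E] (μ : Measure E)
    [μ.IsAddHaarMeasure] (f : E ≃ₗ[ℝ] E) {F : E → ENNReal} (hF : Measurable F) :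
    ∫⁻ x, F (f.symm x) ∂μ = ENNReal.ofReal |LinearMap.det (f : E →ₗ[ℝ] E)| * ∫⁻ x, F x ∂μ := by
  have hdet : LinearMap.det (f.symm : E →ₗ[ℝ] E) ≠ 0 := (LinearEquiv.isUnit_det' f.symm).ne_zero
  have hdet_symm : (LinearMap.det (f.symm : E →ₗ[ℝ] E))⁻¹ = LinearMap.det (f : E →ₗ[ℝ] E) := by
    rw [← LinearEquiv.coe_inv_det, Units.val_inv_eq_inv_val, inv_inv, LinearEquiv.coe_det]
  have hcont : Continuous f.symm := f.symm.toLinearMap.continuous_of_finiteDimensional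
  have hmap : μ.map f.symm = ENNReal.ofReal |(LinearMap.det (f.symm : E →ₗ[ℝ] E))⁻¹| • μ :=
    Measure.map_linearMap_addHaar_eq_smul_addHaar μ hdet
  rw [← lintegral_map hF hcont.measurable, hmap, hdet_symm, lintegral_smul_measure, smul_eq_mul]

theorem curveIntegral'_const_mul (c : ℝ) (ρ : ℂ → ℝ) (γ : ℝ → ℂ) :
    curveIntegral' (fun z => c * ρ z) γ = c * curveIntegral' ρ γ := by
  simp only [curveIntegral', mul_assoc, intervalIntegral.integral_const_mul]

theorem mul_curveIntegral'_le_comp_linearEquiv (f : ℂ ≃ₗ[ℝ] ℂ) {σ : ℝ}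
    (hf : ∀ z, σ * ‖z‖ ≤ ‖f z‖) {ρ : ℂ → ℝ} (hρ : ∀ z, 0 ≤ ρ z) (γ : ℝ → ℂ) :
    σ * curveIntegral' ρ γ ≤ curveIntegral' (ρ ∘ f.symm) (f ∘ γ) := by
  have hintegrand : ∀ t, (ρ ∘ f.symm) ((f ∘ γ) t) * ‖deriv (f ∘ γ) t‖ =
      ρ (γ t) * ‖f (deriv γ t)‖ := fun t => by
    simpa using congrArg (fun v => ρ (γ t) * ‖v‖) (f.toContinuousLinearEquiv.comp_deriv γ t)
  simp only [curveIntegral', hintegrand]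
  by_cases hint : IntervalIntegrable (fun t => ρ (γ t) * ‖deriv γ t‖) volume 0 1
  · rw [← intervalIntegral.integral_const_mul]
    refine intervalIntegral.integral_mono_on zero_le_one (hint.const_mul σ)
      (hint.mul_norm_map (f.toContinuousLinearEquiv : ℂ →L[ℝ] ℂ) (measurable_deriv γ))
      fun t _ => ?_
    calc σ * (ρ (γ t) * ‖deriv γ t‖) = ρ (γ t) * (σ * ‖deriv γ t‖) := by ring
      _ ≤ ρ (γ t) * ‖f (deriv γ t)‖ := by gcongr; exacts [hρ _, hf _]
  · -- the junk value `0` of a non-integrable integral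
    rw [intervalIntegral.integral_undef hint, mul_zero]
    exact intervalIntegral.integral_nonneg zero_le_one fun t _ => by have := hρ (γ t); positivity

theorem Allowable.image_linearEquiv {ρ : ℂ → ℝ} {Γ : Set (ℝ → ℂ)} (hρ : Allowable ρ Γ)
    (f : ℂ ≃ₗ[ℝ] ℂ) {σ : ℝ} (hσ : 0 < σ) (hf : ∀ z, σ * ‖z‖ ≤ ‖f z‖) :
    Allowable (fun w => σ⁻¹ * ρ (f.symm w)) ((fun γ => f ∘ γ) '' Γ) := by
  obtain ⟨hmeas, hnonneg, hadm⟩ := hρ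
  have hcont : Continuous f.symm := f.symm.toLinearMap.continuous_of_finiteDimensional
  refine ⟨(hmeas.comp hcont.measurable).const_mul _,
    fun w => mul_nonneg (inv_nonneg.2 hσ.le) (hnonneg _), ?_⟩
  rintro _ ⟨γ, hγ, rfl⟩
  rw [curveIntegral'_const_mul, le_inv_mul_iff₀ hσ, mul_one]
  exact (le_mul_of_one_le_right hσ.le (hadm γ hγ)).trans
    (mul_curveIntegral'_le_comp_linearEquiv f hf hnonneg γ)

theorem modulus_le_mul_of_forall_allowable {Γ Γ' : Set (ℝ → ℂ)} {K : ENNReal} (hK₀ : K ≠ 0)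
    (hK : K ≠ ⊤) (h : ∀ ρ, Allowable ρ Γ → ∃ ρ', Allowable ρ' Γ' ∧
      ∫⁻ z, ENNReal.ofReal (ρ' z ^ 2) ≤ K * ∫⁻ z, ENNReal.ofReal (ρ z ^ 2)) :
    modulus Γ' ≤ K * modulus Γ := by
  have hKmod : K * modulus Γ =
      ⨅ (ρ : ℂ → ℝ) (_ : Allowable ρ Γ), K * ∫⁻ z, ENNReal.ofReal (ρ z ^ 2) := by
    simp only [modulus, ENNReal.mul_iInf_of_ne hK₀ hK]
  rw [hKmod]
  refine le_iInf₂ fun ρ hρ => ?_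
  obtain ⟨ρ', hρ', hle⟩ := h ρ hρ
  exact (iInf₂_le ρ' hρ').trans hle

theorem modulus_image_linearEquiv_le (f : ℂ ≃ₗ[ℝ] ℂ) {σ : ℝ} (hσ : 0 < σ)
    (hf : ∀ z, σ * ‖z‖ ≤ ‖f z‖) (Γ : Set (ℝ → ℂ)) :
    modulus ((fun γ => f ∘ γ) '' Γ) ≤
      ENNReal.ofReal (|LinearMap.det (f : ℂ →ₗ[ℝ] ℂ)| / σ ^ 2) * modulus Γ := by
  have hdet : LinearMap.det (f : ℂ →ₗ[ℝ] ℂ) ≠ 0 := (LinearEquiv.isUnit_det' f).ne_zero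
  have hK₀ : ENNReal.ofReal (|LinearMap.det (f : ℂ →ₗ[ℝ] ℂ)| / σ ^ 2) ≠ 0 :=
    (ENNReal.ofReal_pos.2 (div_pos (abs_pos.2 hdet) (by positivity))).ne'
  refine modulus_le_mul_of_forall_allowable hK₀ ENNReal.ofReal_ne_top fun ρ hρ =>
    ⟨_, hρ.image_linearEquiv f hσ hf, le_of_eq ?_⟩
  have hsq : Measurable fun z => ENNReal.ofReal (ρ z ^ 2) :=
    (hρ.1.pow_const 2).ennreal_ofReal
  calc ∫⁻ z, ENNReal.ofReal ((σ⁻¹ * ρ (f.symm z)) ^ 2)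
      = ∫⁻ z, ENNReal.ofReal ((σ ^ 2)⁻¹) * ENNReal.ofReal (ρ (f.symm z) ^ 2) := by
        simp only [mul_pow, inv_pow, ENNReal.ofReal_mul (inv_nonneg.2 (sq_nonneg σ))]
    _ = ENNReal.ofReal ((σ ^ 2)⁻¹) *
        (ENNReal.ofReal |LinearMap.det (f : ℂ →ₗ[ℝ] ℂ)| * ∫⁻ z, ENNReal.ofReal (ρ z ^ 2)) := by
        rw [lintegral_const_mul' _ _ ENNReal.ofReal_ne_top,
          lintegral_comp_linearEquiv_symm volume f hsq]
    _ = _ := by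
        rw [← mul_assoc, ← ENNReal.ofReal_mul (by positivity), inv_mul_eq_div]

theorem modulus_quasi_invariance_general (f : ℂ ≃ₗ[ℝ] ℂ) (σ₁ σ₂ : ℝ)
    (hσ₂ : 0 < σ₂)
    (hlower : ∀ z : ℂ, σ₂ * ‖z‖ ≤ ‖f z‖)
    (hdet : σ₁ * σ₂ = |LinearMap.det (f : ℂ →ₗ[ℝ] ℂ)|)
    (Γ : Set (ℝ → ℂ)) :
    modulus ((fun γ : ℝ → ℂ => (f : ℂ → ℂ) ∘ γ) '' Γ)
      ≤ ENNReal.ofReal (σ₁ / σ₂) * modulus Γ := by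
  have hK : |LinearMap.det (f : ℂ →ₗ[ℝ] ℂ)| / σ₂ ^ 2 = σ₁ / σ₂ := by
    rw [← hdet]
    field_simp
  simpa only [hK] using modulus_image_linearEquiv_le f hσ₂ hlower Γ

/-- Quasi-invariance of the modulus under an invertible real-linear map of `ℂ` with
singular values `σ₁ ≥ σ₂ > 0` (characterized by the bounds `σ₂‖z‖ ≤ ‖f z‖ ≤ σ₁‖z‖`
together with `σ₁σ₂ = |det f|`): `mod(f(Γ)) ≤ K · mod(Γ)` with `K = σ₁/σ₂`. -/
theorem modulus_quasi_invariance (f : ℂ ≃ₗ[ℝ] ℂ) (σ₁ σ₂ : ℝ)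
    (hσ₂ : 0 < σ₂) (hσ : σ₂ ≤ σ₁)
    (hupper : ∀ z : ℂ, ‖f z‖ ≤ σ₁ * ‖z‖)
    (hlower : ∀ z : ℂ, σ₂ * ‖z‖ ≤ ‖f z‖)
    (hdet : σ₁ * σ₂ = |LinearMap.det (f : ℂ →ₗ[ℝ] ℂ)|)
    (Γ : Set (ℝ → ℂ)) :
    modulus ((fun γ : ℝ → ℂ => (f : ℂ → ℂ) ∘ γ) '' Γ)
      ≤ ENNReal.ofReal (σ₁ / σ₂) * modulus Γ :=
  modulus_quasi_invariance_general f σ₁ σ₂ hσ₂ hlower hdet Γ
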